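/- Let 0 < ρ < 1 and, for ε with |ρ+ε| > ρ, let M(ε) = 1 + ρ² - ρ(s(ε) + s(ε)^{-1}) where s(ε) = (ρε(ε+2ρ) - sqrt(ρ²ε²(ε+2ρ)² + 4ρ²(ε+ρ)²))/(2(ε+ρ)²), and let m(ε) = 1 + ρ² - ρ(t(ε) + t(ε)^{-1}) with t(ε) the other root. Then as ε → ∞, m(ε) → 0 and (M(ε) - (1+ρ)²)/ε² → 1. -/

import Mathlib

open Filter

/-- As `ε → ∞`, `m(ε) → 0` and `(M(ε) - (1+ρ)²)/ε² → 1`, where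
`m(ε) = 1+ρ²-ρ(t(ε)+t(ε)⁻¹)`, `M(ε) = 1+ρ²-ρ(s(ε)+s(ε)⁻¹)` and `s(ε), t(ε)` are the
two roots of `-(ε+ρ)²z² + ερ(ε+2ρ)z + ρ² = 0`. -/
theorem stmt_17 (ρ : ℝ) (hρ₁ : 0 < ρ) (hρ₂ : ρ < 1) :
    let s : ℝ → ℝ := fun ε => (ρ * ε * (ε + 2 * ρ)
        - Real.sqrt (ρ ^ 2 * ε ^ 2 * (ε + 2 * ρ) ^ 2 + 4 * ρ ^ 2 * (ε + ρ) ^ 2))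
        / (2 * (ε + ρ) ^ 2)
    let t : ℝ → ℝ := fun ε => (ρ * ε * (ε + 2 * ρ)
        + Real.sqrt (ρ ^ 2 * ε ^ 2 * (ε + 2 * ρ) ^ 2 + 4 * ρ ^ 2 * (ε + ρ) ^ 2))
        / (2 * (ε + ρ) ^ 2)
    Tendsto (fun ε => 1 + ρ ^ 2 - ρ * (t ε + (t ε)⁻¹)) atTop (nhds 0) ∧
    Tendsto (fun ε => ((1 + ρ ^ 2 - ρ * (s ε + (s ε)⁻¹)) - (1 + ρ) ^ 2) / ε ^ 2)
      atTop (nhds 1) := by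
  intro s t
  have hρ0 : ρ ≠ 0 := ne_of_gt hρ₁
  set R : ℝ → ℝ := fun x => Real.sqrt ((1 + 2*ρ*x)^2 + 4*x^2*(1 + ρ*x)^2) with hRdef
  have hRcont : Continuous R := by
    apply Real.continuous_sqrt.comp
    continuity
  have hR0 : R 0 = 1 := by simp [hRdef]
  set T : ℝ → ℝ := fun x => ρ * (1 + 2*ρ*x + R x) / (2 * (1 + ρ*x)^2) with hTdef
  set S : ℝ → ℝ := fun x => ρ * (1 + 2*ρ*x - R x) / (2 * (1 + ρ*x)^2) with hSdef
  -- sqrt identity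
  have hD : ∀ ε : ℝ, 1 ≤ ε →
      Real.sqrt (ρ^2*ε^2*(ε+2*ρ)^2 + 4*ρ^2*(ε+ρ)^2) = ρ*ε^2 * R ε⁻¹ := by
    intro ε hε
    have hε0 : (0:ℝ) < ε := lt_of_lt_of_le one_pos hε
    have hεne : ε ≠ 0 := ne_of_gt hε0
    have h1 : ρ^2*ε^2*(ε+2*ρ)^2 + 4*ρ^2*(ε+ρ)^2
        = (ρ*ε^2)^2 * ((1 + 2*ρ*ε⁻¹)^2 + 4*ε⁻¹^2*(1 + ρ*ε⁻¹)^2) := by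
      field_simp
    rw [h1, Real.sqrt_mul (by positivity), Real.sqrt_sq (by positivity)]
  have ht : ∀ ε : ℝ, 1 ≤ ε → t ε = T ε⁻¹ := by
    intro ε hε
    have hε0 : (0:ℝ) < ε := lt_of_lt_of_le one_pos hε
    have hεne : ε ≠ 0 := ne_of_gt hε0
    have h2 : ε + ρ ≠ 0 := by positivity
    have h3 : 1 + ρ*ε⁻¹ ≠ 0 := by positivity
    show (ρ * ε * (ε + 2 * ρ) + Real.sqrt _) / (2 * (ε + ρ) ^ 2) = _
    rw [hD ε hε, hTdef]
    field_simp
  have hs : ∀ ε : ℝ, 1 ≤ ε → s ε = S ε⁻¹ := by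
    intro ε hε
    have hε0 : (0:ℝ) < ε := lt_of_lt_of_le one_pos hε
    have hεne : ε ≠ 0 := ne_of_gt hε0
    have h2 : ε + ρ ≠ 0 := by positivity
    have h3 : 1 + ρ*ε⁻¹ ≠ 0 := by positivity
    show (ρ * ε * (ε + 2 * ρ) - Real.sqrt _) / (2 * (ε + ρ) ^ 2) = _
    rw [hD ε hε, hSdef]
    field_simp
  -- rationalized inverse of s
  have hsinv : ∀ ε : ℝ, 1 ≤ ε → (s ε)⁻¹
      = -(ρ*ε*(ε+2*ρ) + Real.sqrt (ρ^2*ε^2*(ε+2*ρ)^2 + 4*ρ^2*(ε+ρ)^2)) / (2*ρ^2) := by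
    intro ε hε
    have hε0 : (0:ℝ) < ε := lt_of_lt_of_le one_pos hε
    set N : ℝ := ρ*ε*(ε+2*ρ) with hN
    set D : ℝ := Real.sqrt (ρ^2*ε^2*(ε+2*ρ)^2 + 4*ρ^2*(ε+ρ)^2) with hDdef
    have harg : (0:ℝ) ≤ ρ^2*ε^2*(ε+2*ρ)^2 + 4*ρ^2*(ε+ρ)^2 := by positivity
    have hD2 : D^2 = ρ^2*ε^2*(ε+2*ρ)^2 + 4*ρ^2*(ε+ρ)^2 := Real.sq_sqrt harg
    have hNpos : 0 ≤ N := by positivity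
    have hNltD : N < D := by
      rw [hDdef, Real.lt_sqrt hNpos]
      have : 0 < 4*ρ^2*(ε+ρ)^2 := by positivity
      nlinarith
    have hseq : s ε = (N - D) / (2*(ε+ρ)^2) := rfl
    have hND : N - D ≠ 0 := by linarith
    rw [hseq, inv_div, div_eq_div_iff hND (by positivity)]
    nlinarith [hD2]
  -- the function appearing in the second limit
  set G : ℝ → ℝ := fun x => (-2*ρ)*x^2 - ρ*x^2*S x + (1 + 2*ρ*x + R x)/2 with hGdef
  have hkey2 : ∀ ε : ℝ, 1 ≤ ε →
      ((1 + ρ ^ 2 - ρ * (s ε + (s ε)⁻¹)) - (1 + ρ) ^ 2) / ε ^ 2 = G ε⁻¹ := by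
    intro ε hε
    have hε0 : (0:ℝ) < ε := lt_of_lt_of_le one_pos hε
    have hεne : ε ≠ 0 := ne_of_gt hε0
    have h3 : 1 + ρ*ε⁻¹ ≠ 0 := by positivity
    rw [hsinv ε hε, hs ε hε, hD ε hε, hGdef, hSdef]
    field_simp
    ring
  have hkey1 : ∀ ε : ℝ, 1 ≤ ε →
      1 + ρ ^ 2 - ρ * (t ε + (t ε)⁻¹)
        = 1 + ρ ^ 2 - ρ * (T ε⁻¹ + (T ε⁻¹)⁻¹) := by
    intro ε hε
    rw [ht ε hε]
  -- continuity facts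
  have hTcont : ContinuousAt T 0 := by
    apply ContinuousAt.div
    · exact (continuous_const.mul ((continuous_const.add
        (continuous_const.mul continuous_id)).add hRcont)).continuousAt
    · exact (continuous_const.mul ((continuous_const.add
        (continuous_const.mul continuous_id)).pow 2)).continuousAt
    · norm_num
  have hScont : ContinuousAt S 0 := by
    apply ContinuousAt.div
    · exact (continuous_const.mul ((continuous_const.add
        (continuous_const.mul continuous_id)).sub hRcont)).continuousAt
    · exact (continuous_const.mul ((continuous_const.add
        (continuous_const.mul continuous_id)).pow 2)).continuousAt
    · norm_num
  have hT0 : T 0 = ρ := by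
    rw [hTdef]; simp [hR0]; ring
  have hT0ne : T 0 ≠ 0 := by rw [hT0]; exact hρ0
  have hinvtend : Tendsto (fun ε : ℝ => ε⁻¹) atTop (nhds 0) := tendsto_inv_atTop_zero
  constructor
  · -- first limit
    have hFcont : ContinuousAt (fun x => 1 + ρ ^ 2 - ρ * (T x + (T x)⁻¹)) 0 := by
      exact (continuousAt_const.sub (continuousAt_const.mul
        (hTcont.add (hTcont.inv₀ hT0ne))))
    have hF0 : 1 + ρ ^ 2 - ρ * (T 0 + (T 0)⁻¹) = 0 := by
      rw [hT0]; field_simp; ring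
    have h := hFcont.tendsto.comp hinvtend
    rw [hF0] at h
    apply h.congr'
    filter_upwards [eventually_ge_atTop (1:ℝ)] with ε hε
    exact (hkey1 ε hε).symm
  · -- second limit
    have hGcont : ContinuousAt G 0 := by
      rw [hGdef]
      apply ContinuousAt.add
      · apply ContinuousAt.sub
        · exact (continuous_const.mul (continuous_id.pow 2)).continuousAt
        · exact ((continuous_const.mul (continuous_id.pow 2)).continuousAt.mul hScont)
      · exact (((continuous_const.add
          (continuous_const.mul continuous_id)).add hRcont).div_const 2).continuousAt
    have hG0 : G 0 = 1 := by
      rw [hGdef]; simp [hR0]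
    have h := hGcont.tendsto.comp hinvtend
    rw [hG0] at h
    apply h.congr'
    filter_upwards [eventually_ge_atTop (1:ℝ)] with ε hε
    exact (hkey2 ε hε).symm
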